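/- arXiv:1405.0721 — 3 statements merged into one kernel-verified Lean document; each statement's English description precedes it below -/
import Mathlib

section
/- Let S be a commutative ring, let r, s be natural numbers, and let (d₁, d₂, d₃, d₄) be a 4-tuple of natural numbers. Consider the polynomial ring MvPolynomial ι S in variables indexed by ι = (Fin r ⊕ Fin s) × (Fin s ⊕ Fin r), with the four blocks of variables as follows: the r×s block (rows inl, columns inl), the r×r block (rows inl, columns inr), the s×s block (rows inr, columns inl), and the s×r block (rows inr, columns inr). Let 𝔖_{d₁}(r×r), 𝔖_{d₂}(s×s), 𝔖_{d₃}(r×s), 𝔖_{d₄}(s×r) denote, respectively, the S-modules of homogeneous polynomials of degrees d₁, d₂, d₃, d₄ in MvPolynomial (Fin r × Fin r) S, MvPolynomial (Fin s × Fin s) S, MvPolynomial (Fin r × Fin s) S, MvPolynomial (Fin s × Fin r) S. Then the S-linear map from the tensor product 𝔖_{d₁}(r×r) ⊗ 𝔖_{d₂}(s×s) ⊗ 𝔖_{d₃}(r×s) ⊗ 𝔖_{d₄}(s×r) to MvPolynomial ι S, induced by p₁ ⊗ p₂ ⊗ p₃ ⊗ p₄ ↦ p₁·p₂·p₃·p₄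 (where each pᵢ is viewed in MvPolynomial ι S by renaming its variables into the corresponding block of variables), is injective, and its image is exactly the submodule of polynomials that are simultaneously weighted homogeneous of degree d₁ in the r×r block variables, d₂ in the s×s block variables, d₃ in the r×s block variables, and d₄ in the s×r block variables. -/
/-!
The monomials of degree `d` form a basis of `𝔖_d`, so the tensors of four monomials form a basis
of the fourfold tensor product, and the multiplication map sends such a tensor to the monomial whose
exponent glues the four block exponents together. As the four blocks partition the variables,
gluing is a bijection from quadruples of block exponents onto all exponents, under which the total
degree of each block exponent becomes the corresponding block weight. A linear map sending a basis
injectively to monomials is injective, with image spanned by the monomials it hits.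
-/

open MvPolynomial TensorProduct

noncomputable section

/-- Renaming into the `r×r` block (rows `inl`, columns `inr`). -/
def embRR (r s : ℕ) : Fin r × Fin r → (Fin r ⊕ Fin s) × (Fin s ⊕ Fin r) :=
  fun p => (Sum.inl p.1, Sum.inr p.2)

/-- Renaming into the `s×s` block (rows `inr`, columns `inl`). -/
def embSS (r s : ℕ) : Fin s × Fin s → (Fin r ⊕ Fin s) × (Fin s ⊕ Fin r) :=
  fun p => (Sum.inr p.1, Sum.inl p.2)

/-- Renaming into the `r×s` block (rows `inl`, columns `inl`). -/
def embRS (r s : ℕ) : Fin r × Fin s → (Fin r ⊕ Fin s) × (Fin s ⊕ Fin r) :=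
  fun p => (Sum.inl p.1, Sum.inl p.2)

/-- Renaming into the `s×r` block (rows `inr`, columns `inr`). -/
def embSR (r s : ℕ) : Fin s × Fin r → (Fin r ⊕ Fin s) × (Fin s ⊕ Fin r) :=
  fun p => (Sum.inr p.1, Sum.inr p.2)

/-- Indicator weight of the `r×s` block. -/
def wtRS (r s : ℕ) : (Fin r ⊕ Fin s) × (Fin s ⊕ Fin r) → ℕ
  | (Sum.inl _, Sum.inl _) => 1
  | _ => 0

/-- Indicator weight of the `r×r` block. -/
def wtRR (r s : ℕ) : (Fin r ⊕ Fin s) × (Fin s ⊕ Fin r) → ℕ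
  | (Sum.inl _, Sum.inr _) => 1
  | _ => 0

/-- Indicator weight of the `s×s` block. -/
def wtSS (r s : ℕ) : (Fin r ⊕ Fin s) × (Fin s ⊕ Fin r) → ℕ
  | (Sum.inr _, Sum.inl _) => 1
  | _ => 0

/-- Indicator weight of the `s×r` block. -/
def wtSR (r s : ℕ) : (Fin r ⊕ Fin s) × (Fin s ⊕ Fin r) → ℕ
  | (Sum.inr _, Sum.inr _) => 1
  | _ => 0

variable (S : Type*) [CommRing S] (r s d₁ d₂ d₃ d₄ : ℕ)

/-- Polynomials multihomogeneous of degrees `d₁, d₂, d₃, d₄` in the `r×r`, `s×s`, `r×s`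
and `s×r` blocks of variables, respectively. -/
def blockSubmodule : Submodule S (MvPolynomial ((Fin r ⊕ Fin s) × (Fin s ⊕ Fin r)) S) :=
  weightedHomogeneousSubmodule S (wtRR r s) d₁ ⊓
    weightedHomogeneousSubmodule S (wtSS r s) d₂ ⊓
      weightedHomogeneousSubmodule S (wtRS r s) d₃ ⊓
        weightedHomogeneousSubmodule S (wtSR r s) d₄

/-- Inclusion of `𝔖_{d₁}(r×r)` into the big polynomial ring, as a linear map. -/
def inclRR : (homogeneousSubmodule (Fin r × Fin r) S d₁) →ₗ[S]
    MvPolynomial ((Fin r ⊕ Fin s) × (Fin s ⊕ Fin r)) S :=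
  (rename (embRR r s)).toLinearMap ∘ₗ (homogeneousSubmodule (Fin r × Fin r) S d₁).subtype

/-- Inclusion of `𝔖_{d₂}(s×s)` into the big polynomial ring, as a linear map. -/
def inclSS : (homogeneousSubmodule (Fin s × Fin s) S d₂) →ₗ[S]
    MvPolynomial ((Fin r ⊕ Fin s) × (Fin s ⊕ Fin r)) S :=
  (rename (embSS r s)).toLinearMap ∘ₗ (homogeneousSubmodule (Fin s × Fin s) S d₂).subtype

/-- Inclusion of `𝔖_{d₃}(r×s)` into the big polynomial ring, as a linear map. -/
def inclRS : (homogeneousSubmodule (Fin r × Fin s) S d₃) →ₗ[S]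
    MvPolynomial ((Fin r ⊕ Fin s) × (Fin s ⊕ Fin r)) S :=
  (rename (embRS r s)).toLinearMap ∘ₗ (homogeneousSubmodule (Fin r × Fin s) S d₃).subtype

/-- Inclusion of `𝔖_{d₄}(s×r)` into the big polynomial ring, as a linear map. -/
def inclSR : (homogeneousSubmodule (Fin s × Fin r) S d₄) →ₗ[S]
    MvPolynomial ((Fin r ⊕ Fin s) × (Fin s ⊕ Fin r)) S :=
  (rename (embSR r s)).toLinearMap ∘ₗ (homogeneousSubmodule (Fin s × Fin r) S d₄).subtype

/-- The multiplication map on `𝔖_{d₁}(r×r) ⊗ 𝔖_{d₂}(s×s)`. -/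
def mulMap₁₂ : (homogeneousSubmodule (Fin r × Fin r) S d₁ ⊗[S]
      homogeneousSubmodule (Fin s × Fin s) S d₂) →ₗ[S]
    MvPolynomial ((Fin r ⊕ Fin s) × (Fin s ⊕ Fin r)) S :=
  TensorProduct.lift
    (((LinearMap.mul S (MvPolynomial ((Fin r ⊕ Fin s) × (Fin s ⊕ Fin r)) S)).compl₂
        (inclSS S r s d₂)).comp (inclRR S r s d₁))

/-- The multiplication map on `(𝔖_{d₁}(r×r) ⊗ 𝔖_{d₂}(s×s)) ⊗ 𝔖_{d₃}(r×s)`. -/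
def mulMap₁₂₃ : ((homogeneousSubmodule (Fin r × Fin r) S d₁ ⊗[S]
      homogeneousSubmodule (Fin s × Fin s) S d₂) ⊗[S]
      homogeneousSubmodule (Fin r × Fin s) S d₃) →ₗ[S]
    MvPolynomial ((Fin r ⊕ Fin s) × (Fin s ⊕ Fin r)) S :=
  TensorProduct.lift
    (((LinearMap.mul S (MvPolynomial ((Fin r ⊕ Fin s) × (Fin s ⊕ Fin r)) S)).compl₂
        (inclRS S r s d₃)).comp (mulMap₁₂ S r s d₁ d₂))

/-- The multiplication map `𝔖_{d₁}(r×r) ⊗ 𝔖_{d₂}(s×s) ⊗ 𝔖_{d₃}(r×s) ⊗ 𝔖_{d₄}(s×r) →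
MvPolynomial ((Fin r ⊕ Fin s) × (Fin s ⊕ Fin r)) S`, induced by
`p₁ ⊗ p₂ ⊗ p₃ ⊗ p₄ ↦ p₁·p₂·p₃·p₄` after renaming into the four blocks. -/
def mulMapFull : (((homogeneousSubmodule (Fin r × Fin r) S d₁ ⊗[S]
      homogeneousSubmodule (Fin s × Fin s) S d₂) ⊗[S]
      homogeneousSubmodule (Fin r × Fin s) S d₃) ⊗[S]
      homogeneousSubmodule (Fin s × Fin r) S d₄) →ₗ[S]
    MvPolynomial ((Fin r ⊕ Fin s) × (Fin s ⊕ Fin r)) S :=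
  TensorProduct.lift
    (((LinearMap.mul S (MvPolynomial ((Fin r ⊕ Fin s) × (Fin s ⊕ Fin r)) S)).compl₂
        (inclSR S r s d₄)).comp (mulMap₁₂₃ S r s d₁ d₂ d₃))

namespace MvPolynomial

theorem coe_basisRestrictSupport_apply {σ R : Type*} [CommSemiring R] (s : Set (σ →₀ ℕ))
    (d : s) : (basisRestrictSupport R s d : MvPolynomial σ R) = monomial d 1 := by
  classical
  change AddMonoidAlgebra.ofCoeff
    ((Finsupp.supportedEquivFinsupp (M := R) (R := R) s).symm (Finsupp.single d 1) :
      (σ →₀ ℕ) →₀ R) = _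
  rw [Finsupp.supportedEquivFinsupp_symm_apply_coe, Finsupp.extendDomain_single]
  rfl

def homogeneousBasis (σ R : Type*) [CommSemiring R] (n : ℕ) :
    Module.Basis {d : σ →₀ ℕ | d.degree = n} R (homogeneousSubmodule σ R n) :=
  (basisRestrictSupport R _).map
    (LinearEquiv.ofEq _ _ (homogeneousSubmodule_eq_finsupp_supported σ R n).symm)

@[simp] theorem coe_homogeneousBasis_apply {σ R : Type*} [CommSemiring R] (n : ℕ)
    (d : {d : σ →₀ ℕ | d.degree = n}) :
    (homogeneousBasis σ R n d : MvPolynomial σ R) = monomial d 1 :=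
  coe_basisRestrictSupport_apply _ d

theorem injective_and_range_eq_restrictSupport_of_basis {ι σ R M : Type*} [CommRing R]
    [AddCommMonoid M] [Module R M] (b : Module.Basis ι R M) {f : M →ₗ[R] MvPolynomial σ R}
    {e : ι → σ →₀ ℕ} (he : Function.Injective e) (hf : ∀ i, f (b i) = monomial (e i) 1) :
    Function.Injective f ∧ LinearMap.range f = restrictSupport R (Set.range e) := by
  have hfb : ⇑f ∘ ⇑b = (fun m => monomial m (1 : R)) ∘ e := _root_.funext hf
  constructor
  · have hli : LinearIndependent R (⇑f ∘ ⇑b) := by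
      rw [hfb]
      exact ((basisMonomials σ R).linearIndependent.comp e he : _)
    have hfz : ∀ z, f z = Finsupp.linearCombination R (⇑f ∘ ⇑b) (b.repr z) := fun z => by
      rw [← Finsupp.apply_linearCombination, b.linearCombination_repr]
    exact fun x y hxy => b.repr.injective <| hli.finsuppLinearCombination_injective <| by
      rw [← hfz, ← hfz, hxy]
  · rw [LinearMap.range_eq_map, ← b.span_eq, Submodule.map_span, ← Set.range_comp, hfb,
      Set.range_comp, restrictSupport_eq_span]

theorem restrictSupport_inf {σ R : Type*} [CommSemiring R] (s t : Set (σ →₀ ℕ)) :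
    restrictSupport R s ⊓ restrictSupport R t = restrictSupport R (s ∩ t) := by
  ext p
  simp only [Submodule.mem_inf, mem_restrictSupport_iff, Set.subset_inter_iff]

theorem weightedHomogeneousSubmodule_eq_restrictSupport {σ R : Type*} [CommSemiring R]
    (w : σ → ℕ) (n : ℕ) :
    weightedHomogeneousSubmodule R w n = restrictSupport R {d | Finsupp.weight w d = n} :=
  weightedHomogeneousSubmodule_eq_finsupp_supported R w n

end MvPolynomial

theorem Finsupp.weight_mapDomain {σ τ : Type*} (f : σ → τ) (w : τ → ℕ) (m : σ →₀ ℕ) :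
    weight w (mapDomain f m) = weight (w ∘ f) m := by
  classical
  simp only [weight_apply]
  rw [sum_mapDomain_index (by simp) (fun _ _ _ => add_smul ..)]
  rfl

theorem embRR_injective : Function.Injective (embRR r s) := fun _ _ h => by
  simpa [embRR, Prod.ext_iff] using h

theorem embSS_injective : Function.Injective (embSS r s) := fun _ _ h => by
  simpa [embSS, Prod.ext_iff] using h

theorem embRS_injective : Function.Injective (embRS r s) := fun _ _ h => by
  simpa [embRS, Prod.ext_iff] using h

theorem embSR_injective : Function.Injective (embSR r s) := fun _ _ h => by
  simpa [embSR, Prod.ext_iff] using h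

abbrev BlockExponents (r s : ℕ) : Type :=
  (((Fin r × Fin r →₀ ℕ) × (Fin s × Fin s →₀ ℕ)) × (Fin r × Fin s →₀ ℕ)) × (Fin s × Fin r →₀ ℕ)

def blockExponent (x : BlockExponents r s) : (Fin r ⊕ Fin s) × (Fin s ⊕ Fin r) →₀ ℕ :=
  x.1.1.1.mapDomain (embRR r s) + x.1.1.2.mapDomain (embSS r s) + x.1.2.mapDomain (embRS r s) +
    x.2.mapDomain (embSR r s)

def blockRestrict (m : (Fin r ⊕ Fin s) × (Fin s ⊕ Fin r) →₀ ℕ) : BlockExponents r s :=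
  (((m.comapDomain (embRR r s) (embRR_injective r s).injOn,
    m.comapDomain (embSS r s) (embSS_injective r s).injOn),
    m.comapDomain (embRS r s) (embRS_injective r s).injOn),
    m.comapDomain (embSR r s) (embSR_injective r s).injOn)

@[simp] theorem blockExponent_apply_embRR (x : BlockExponents r s) (p : Fin r × Fin r) :
    blockExponent r s x (embRR r s p) = x.1.1.1 p := by
  simp only [blockExponent, Finsupp.add_apply, Finsupp.mapDomain_apply (embRR_injective r s)]
  simp [Finsupp.mapDomain_of_notMem_range, embRR, embSS, embRS, embSR]

@[simp] theorem blockExponent_apply_embSS (x : BlockExponents r s) (p : Fin s × Fin s) :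
    blockExponent r s x (embSS r s p) = x.1.1.2 p := by
  simp only [blockExponent, Finsupp.add_apply, Finsupp.mapDomain_apply (embSS_injective r s)]
  simp [Finsupp.mapDomain_of_notMem_range, embRR, embSS, embRS, embSR]

@[simp] theorem blockExponent_apply_embRS (x : BlockExponents r s) (p : Fin r × Fin s) :
    blockExponent r s x (embRS r s p) = x.1.2 p := by
  simp only [blockExponent, Finsupp.add_apply, Finsupp.mapDomain_apply (embRS_injective r s)]
  simp [Finsupp.mapDomain_of_notMem_range, embRR, embSS, embRS, embSR]

@[simp] theorem blockExponent_apply_embSR (x : BlockExponents r s) (p : Fin s × Fin r) :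
    blockExponent r s x (embSR r s p) = x.2 p := by
  simp only [blockExponent, Finsupp.add_apply, Finsupp.mapDomain_apply (embSR_injective r s)]
  simp [Finsupp.mapDomain_of_notMem_range, embRR, embSS, embRS, embSR]

theorem blockRestrict_blockExponent (x : BlockExponents r s) :
    blockRestrict r s (blockExponent r s x) = x := by
  ext p <;> simp [blockRestrict]

theorem blockExponent_blockRestrict (m : (Fin r ⊕ Fin s) × (Fin s ⊕ Fin r) →₀ ℕ) :
    blockExponent r s (blockRestrict r s m) = m := by
  ext ⟨i | i, j | j⟩
  · exact blockExponent_apply_embRS r s _ (i, j)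
  · exact blockExponent_apply_embRR r s _ (i, j)
  · exact blockExponent_apply_embSS r s _ (i, j)
  · exact blockExponent_apply_embSR r s _ (i, j)

theorem weight_blockExponent (x : BlockExponents r s) :
    Finsupp.weight (wtRR r s) (blockExponent r s x) = x.1.1.1.degree ∧
      Finsupp.weight (wtSS r s) (blockExponent r s x) = x.1.1.2.degree ∧
      Finsupp.weight (wtRS r s) (blockExponent r s x) = x.1.2.degree ∧
      Finsupp.weight (wtSR r s) (blockExponent r s x) = x.2.degree := by
  simp only [blockExponent, map_add, Finsupp.weight_mapDomain]
  simp [Finsupp.degree_eq_weight_one, Finsupp.weight_apply, Function.comp_def, wtRR, wtSS, wtRS,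
    wtSR, embRR, embSS, embRS, embSR]

theorem blockExponent_injective : Function.Injective (blockExponent r s) :=
  Function.LeftInverse.injective (blockRestrict_blockExponent r s)

theorem blockExponent_image :
    blockExponent r s '' ((({d | d.degree = d₁} ×ˢ {d | d.degree = d₂}) ×ˢ {d | d.degree = d₃}) ×ˢ
        {d | d.degree = d₄}) =
      {m | Finsupp.weight (wtRR r s) m = d₁} ∩ {m | Finsupp.weight (wtSS r s) m = d₂} ∩
        {m | Finsupp.weight (wtRS r s) m = d₃} ∩ {m | Finsupp.weight (wtSR r s) m = d₄} := by
  ext m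
  constructor
  · rintro ⟨x, ⟨⟨⟨h₁, h₂⟩, h₃⟩, h₄⟩, rfl⟩
    obtain ⟨w₁, w₂, w₃, w₄⟩ := weight_blockExponent r s x
    exact ⟨⟨⟨w₁.trans h₁, w₂.trans h₂⟩, w₃.trans h₃⟩, w₄.trans h₄⟩
  · rintro ⟨⟨⟨h₁, h₂⟩, h₃⟩, h₄⟩
    obtain ⟨w₁, w₂, w₃, w₄⟩ := weight_blockExponent r s (blockRestrict r s m)
    rw [blockExponent_blockRestrict] at w₁ w₂ w₃ w₄
    exact ⟨_, ⟨⟨⟨w₁.symm.trans h₁, w₂.symm.trans h₂⟩, w₃.symm.trans h₃⟩, w₄.symm.trans h₄⟩,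
      blockExponent_blockRestrict r s m⟩

theorem blockSubmodule_eq_restrictSupport :
    blockSubmodule S r s d₁ d₂ d₃ d₄ = restrictSupport S
      ({m | Finsupp.weight (wtRR r s) m = d₁} ∩ {m | Finsupp.weight (wtSS r s) m = d₂} ∩
        {m | Finsupp.weight (wtRS r s) m = d₃} ∩ {m | Finsupp.weight (wtSR r s) m = d₄}) := by
  simp only [blockSubmodule, weightedHomogeneousSubmodule_eq_restrictSupport, restrictSupport_inf]

theorem mulMapFull_tmul (p₁ : homogeneousSubmodule (Fin r × Fin r) S d₁)
    (p₂ : homogeneousSubmodule (Fin s × Fin s) S d₂)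
    (p₃ : homogeneousSubmodule (Fin r × Fin s) S d₃)
    (p₄ : homogeneousSubmodule (Fin s × Fin r) S d₄) :
    mulMapFull S r s d₁ d₂ d₃ d₄ (((p₁ ⊗ₜ[S] p₂) ⊗ₜ[S] p₃) ⊗ₜ[S] p₄) =
      rename (embRR r s) (p₁ : MvPolynomial (Fin r × Fin r) S) *
        rename (embSS r s) (p₂ : MvPolynomial (Fin s × Fin s) S) *
          rename (embRS r s) (p₃ : MvPolynomial (Fin r × Fin s) S) *
            rename (embSR r s) (p₄ : MvPolynomial (Fin s × Fin r) S) := by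
  simp [mulMapFull, mulMap₁₂₃, mulMap₁₂, inclRR, inclSS, inclRS, inclSR]

abbrev BlockBasisIndex : Type :=
  ((({d : Fin r × Fin r →₀ ℕ | d.degree = d₁} × {d : Fin s × Fin s →₀ ℕ | d.degree = d₂}) ×
    {d : Fin r × Fin s →₀ ℕ | d.degree = d₃}) × {d : Fin s × Fin r →₀ ℕ | d.degree = d₄})

def blockBasis : Module.Basis (BlockBasisIndex r s d₁ d₂ d₃ d₄) S
    (((homogeneousSubmodule (Fin r × Fin r) S d₁ ⊗[S]
      homogeneousSubmodule (Fin s × Fin s) S d₂) ⊗[S]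
      homogeneousSubmodule (Fin r × Fin s) S d₃) ⊗[S]
      homogeneousSubmodule (Fin s × Fin r) S d₄) :=
  (((homogeneousBasis (Fin r × Fin r) S d₁).tensorProduct
    (homogeneousBasis (Fin s × Fin s) S d₂)).tensorProduct
      (homogeneousBasis (Fin r × Fin s) S d₃)).tensorProduct
        (homogeneousBasis (Fin s × Fin r) S d₄)

theorem mulMapFull_blockBasis (i : BlockBasisIndex r s d₁ d₂ d₃ d₄) :
    mulMapFull S r s d₁ d₂ d₃ d₄ (blockBasis S r s d₁ d₂ d₃ d₄ i) = monomial
      (blockExponent r s (Prod.map (Prod.map (Prod.map Subtype.val Subtype.val) Subtype.val)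
        Subtype.val i)) 1 := by
  obtain ⟨⟨⟨i₁, i₂⟩, i₃⟩, i₄⟩ := i
  simp [blockBasis, mulMapFull_tmul, rename_monomial, monomial_mul, blockExponent]

/-- The tensor-product multiplication map is induced by `p₁ ⊗ p₂ ⊗ p₃ ⊗ p₄ ↦ p₁·p₂·p₃·p₄`,
is injective, and its image is exactly the submodule of polynomials simultaneously weighted
homogeneous of degree `d₁` in the `r×r` block, `d₂` in the `s×s` block, `d₃` in the `r×s`
block, and `d₄` in the `s×r` block. -/
theorem mulMapFull_injective_and_range :
    (∀ (p₁ : homogeneousSubmodule (Fin r × Fin r) S d₁)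
      (p₂ : homogeneousSubmodule (Fin s × Fin s) S d₂)
      (p₃ : homogeneousSubmodule (Fin r × Fin s) S d₃)
      (p₄ : homogeneousSubmodule (Fin s × Fin r) S d₄),
      mulMapFull S r s d₁ d₂ d₃ d₄ (((p₁ ⊗ₜ[S] p₂) ⊗ₜ[S] p₃) ⊗ₜ[S] p₄) =
        rename (embRR r s) (p₁ : MvPolynomial (Fin r × Fin r) S) *
          rename (embSS r s) (p₂ : MvPolynomial (Fin s × Fin s) S) *
            rename (embRS r s) (p₃ : MvPolynomial (Fin r × Fin s) S) *
              rename (embSR r s) (p₄ : MvPolynomial (Fin s × Fin r) S)) ∧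
    Function.Injective (mulMapFull S r s d₁ d₂ d₃ d₄) ∧
    LinearMap.range (mulMapFull S r s d₁ d₂ d₃ d₄) = blockSubmodule S r s d₁ d₂ d₃ d₄ := by
  obtain ⟨hinj, hrange⟩ := injective_and_range_eq_restrictSupport_of_basis
    (blockBasis S r s d₁ d₂ d₃ d₄) ((blockExponent_injective r s).comp
      (((Subtype.val_injective.prodMap Subtype.val_injective).prodMap
        Subtype.val_injective).prodMap Subtype.val_injective))
    (mulMapFull_blockBasis S r s d₁ d₂ d₃ d₄)
  refine ⟨mulMapFull_tmul S r s d₁ d₂ d₃ d₄, hinj, ?_⟩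
  rw [hrange, blockSubmodule_eq_restrictSupport, Set.range_comp, Set.range_prodMap,
    Set.range_prodMap, Set.range_prodMap, Subtype.range_val, Subtype.range_val, Subtype.range_val,
    Subtype.range_val, blockExponent_image]
end
end

section
/- Let S be a commutative ring, let q, s, j be natural numbers with j ≤ q and j ≤ s, let L be a q×q matrix over S that is lower triangular (L i k = 0 whenever i < k), let U be an s×s matrix over S that is upper triangular (U i k = 0 whenever i > k), and let z be a q×s matrix over S. Then det_j(L · z · U) = det_j(L) · det_j(z) · det_j(U). -/
open Matrix

/-- `det_j(a)`: the determinant of the upper-left `j×j` submatrix of an `l×m` matrix `a`. -/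
def detUL {S : Type*} [CommRing S] {l m : ℕ} (j : ℕ) (h₁ : j ≤ l) (h₂ : j ≤ m)
    (a : Matrix (Fin l) (Fin m) S) : S :=
  (a.submatrix (Fin.castLE h₁) (Fin.castLE h₂)).det

/-!
Cutting off the first `j` rows and columns commutes with multiplication as soon as the
discarded terms `A i a * B a k` (with `i, k < j ≤ a`) vanish. For `(L * z) * U` this holds
because `U a k = 0` for `k < a`, and for `L * z` because `L i a = 0` for `i < a`; the theorem
then follows from multiplicativity of `det`.
-/

theorem Fin.sum_eq_sum_castLE_of_eq_zero {M : Type*} [AddCommMonoid M] {n j : ℕ} (h : j ≤ n)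
    (f : Fin n → M) (hf : ∀ a : Fin n, j ≤ a.val → f a = 0) :
    ∑ a, f a = ∑ a : Fin j, f (Fin.castLE h a) := by
  change _ = ∑ a, f (Fin.castLEEmb h a)
  rw [← Finset.sum_map Finset.univ (Fin.castLEEmb h) f]
  refine (Finset.sum_subset (Finset.subset_univ _) fun a _ ha => hf a ?_).symm
  by_contra! hlt
  exact ha (Finset.mem_map.2 ⟨⟨a, hlt⟩, Finset.mem_univ _, rfl⟩)

namespace Matrix

theorem submatrix_castLE_mul {α : Type*} [NonUnitalNonAssocSemiring α] {l n m j : ℕ}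
    (hl : j ≤ l) (hn : j ≤ n) (hm : j ≤ m) (A : Matrix (Fin l) (Fin n) α)
    (B : Matrix (Fin n) (Fin m) α)
    (h : ∀ (i k : Fin j) (a : Fin n), j ≤ a.val →
      A (Fin.castLE hl i) a * B a (Fin.castLE hm k) = 0) :
    (A * B).submatrix (Fin.castLE hl) (Fin.castLE hm) =
      A.submatrix (Fin.castLE hl) (Fin.castLE hn) *
        B.submatrix (Fin.castLE hn) (Fin.castLE hm) := by
  ext i k
  exact Fin.sum_eq_sum_castLE_of_eq_zero hn _ (h i k)

end Matrix

/-- If `L` is lower triangular, `U` is upper triangular and `z` is any `q×s` matrix, then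
`det_j(L·z·U) = det_j(L) · det_j(z) · det_j(U)`. -/
theorem detUL_triangular_mul
    (S : Type*) [CommRing S] (q s j : ℕ) (hq : j ≤ q) (hs : j ≤ s)
    (L : Matrix (Fin q) (Fin q) S) (hL : ∀ i k : Fin q, i < k → L i k = 0)
    (U : Matrix (Fin s) (Fin s) S) (hU : ∀ i k : Fin s, k < i → U i k = 0)
    (z : Matrix (Fin q) (Fin s) S) :
    detUL j hq hs (L * z * U) = detUL j hq hq L * detUL j hq hs z * detUL j hs hs U := by
  have hLz := submatrix_castLE_mul hq hq hs L z fun i _ a ha => by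
    rw [hL _ a (Fin.lt_def.2 (i.isLt.trans_le ha)), zero_mul]
  have hLzU := submatrix_castLE_mul hq hs hs (L * z) U fun _ k a ha => by
    rw [hU a _ (Fin.lt_def.2 (k.isLt.trans_le ha)), mul_zero]
  rw [detUL, hLzU, hLz, det_mul, det_mul, detUL, detUL, detUL]
end

section
/- Let q, s be positive natural numbers, let μ = min(q, s), let r₁ ≥ r₂ ≥ ⋯ ≥ r_μ ≥ 0 be natural numbers, and set e_j = r_j − r_{j+1} for 1 ≤ j ≤ μ − 1 and e_μ = r_μ. Define P : Matrix (Fin q) (Fin s) ℂ → ℂ by P(z) = ∏_{j=1}^{μ} det_j(z)^{e_j}. Then for every upper triangular q×q complex matrix α (α i k = 0 whenever i > k), every upper triangular s×s complex matrix β, and every q×s complex matrix z: P(αᵀ · z · β) = (∏_{j=1}^{μ} det_j(α)^{e_j}) · (∏_{j=1}^{μ} det_j(β)^{e_j}) · P(z). -/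
open Matrix

/-- The exponents `e_j = r_j - r_{j+1}` (and `e_μ = r_μ`) attached to a decreasing tuple
`r₁ ≥ ⋯ ≥ r_μ ≥ 0`. -/
def wtExps {μ : ℕ} (r : Fin μ → ℕ) : Fin μ → ℕ := fun j =>
  if h : (j : ℕ) + 1 < μ then r j - r ⟨(j : ℕ) + 1, h⟩ else r j

/-- The highest weight vector `P(z) = ∏_{j=1}^{μ} det_j(z)^{e_j}` on `q×s` complex matrices. -/
noncomputable def hwVector (q s : ℕ) (r : Fin (min q s) → ℕ)
    (z : Matrix (Fin q) (Fin s) ℂ) : ℂ :=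
  ∏ j : Fin (min q s),
    (detUL ((j : ℕ) + 1) ((Nat.succ_le_of_lt j.isLt).trans (Nat.min_le_left q s))
      ((Nat.succ_le_of_lt j.isLt).trans (Nat.min_le_right q s)) z) ^ (wtExps r j)

/-!
For upper triangular `α` and `β`, the upper-left `j × j` block of `αᵀ z β` is the product of the
upper-left `j × j` blocks of `αᵀ`, `z` and `β`, so each `det_j` is multiplicative along
`z ↦ αᵀ z β`; `P` is a product of powers of the `det_j`.
-/

namespace Matrix

variable {R ι : Type*}

/-- Only the first `j` rows of an upper triangular `B` reach its first `j` columns. -/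
theorem submatrix_mul_castLE_of_isUpperTriangular [NonUnitalNonAssocSemiring R] {κ : Type*}
    {m j : ℕ} (h : j ≤ m) (f : κ → ι) (A : Matrix ι (Fin m) R)
    {B : Matrix (Fin m) (Fin m) R} (hB : B.IsUpperTriangular) :
    (A * B).submatrix f (Fin.castLE h) =
      A.submatrix f (Fin.castLE h) * B.submatrix (Fin.castLE h) (Fin.castLE h) := by
  ext i k
  refine (Fintype.sum_of_injective (Fin.castLE h) (Fin.castLE_injective h) _ _ ?_
    fun _ => rfl).symm
  intro b hb
  have hkb : Fin.castLE h k < b := by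
    by_contra! hbk
    exact hb ⟨⟨b, lt_of_le_of_lt hbk k.isLt⟩, rfl⟩
  exact mul_eq_zero_of_right _ (hB hkb)

theorem submatrix_castLE_mul_of_isLowerTriangular [NonUnitalCommSemiring R] {κ : Type*}
    {l j : ℕ} (h : j ≤ l) (g : κ → ι) {L : Matrix (Fin l) (Fin l) R}
    (hL : L.IsLowerTriangular) (B : Matrix (Fin l) ι R) :
    (L * B).submatrix (Fin.castLE h) g =
      L.submatrix (Fin.castLE h) (Fin.castLE h) * B.submatrix (Fin.castLE h) g := by
  rw [← transpose_transpose (L * B), transpose_mul, ← transpose_submatrix,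
    submatrix_mul_castLE_of_isUpperTriangular h g Bᵀ hL.transpose, transpose_mul]
  rfl

end Matrix

theorem detUL_transpose_mul_mul {R : Type*} [CommRing R] {q s j : ℕ} (h₁ : j ≤ q) (h₂ : j ≤ s)
    {α : Matrix (Fin q) (Fin q) R} (hα : α.IsUpperTriangular)
    {β : Matrix (Fin s) (Fin s) R} (hβ : β.IsUpperTriangular) (z : Matrix (Fin q) (Fin s) R) :
    detUL j h₁ h₂ (αᵀ * z * β) = detUL j h₁ h₁ α * detUL j h₂ h₂ β * detUL j h₁ h₂ z := by
  rw [detUL, submatrix_mul_castLE_of_isUpperTriangular h₂ _ _ hβ,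
    submatrix_castLE_mul_of_isLowerTriangular h₁ _ hα.transpose, det_mul, det_mul,
    ← transpose_submatrix, det_transpose, detUL, detUL, detUL]
  ring

theorem hwVector_eigenvector_general (q s : ℕ)
    (r : Fin (min q s) → ℕ)
    (α : Matrix (Fin q) (Fin q) ℂ) (hα : ∀ i k : Fin q, k < i → α i k = 0)
    (β : Matrix (Fin s) (Fin s) ℂ) (hβ : ∀ i k : Fin s, k < i → β i k = 0)
    (z : Matrix (Fin q) (Fin s) ℂ) :
    hwVector q s r (αᵀ * z * β) =
      (∏ j : Fin (min q s),
        (detUL ((j : ℕ) + 1) ((Nat.succ_le_of_lt j.isLt).trans (Nat.min_le_left q s))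
          ((Nat.succ_le_of_lt j.isLt).trans (Nat.min_le_left q s)) α) ^ (wtExps r j)) *
      (∏ j : Fin (min q s),
        (detUL ((j : ℕ) + 1) ((Nat.succ_le_of_lt j.isLt).trans (Nat.min_le_right q s))
          ((Nat.succ_le_of_lt j.isLt).trans (Nat.min_le_right q s)) β) ^ (wtExps r j)) *
      hwVector q s r z := by
  rw [hwVector, hwVector, ← Finset.prod_mul_distrib, ← Finset.prod_mul_distrib]
  refine Finset.prod_congr rfl fun j _ => ?_
  rw [detUL_transpose_mul_mul _ _ hα hβ, mul_pow, mul_pow]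

/-- The eigenvector property of the highest weight vector `𝒫(z) = ∏ det_j(z)^{e_j}`:
for upper triangular `α` and `β`,
`P(αᵀ z β) = (∏ det_j(α)^{e_j}) (∏ det_j(β)^{e_j}) P(z)`. -/
theorem hwVector_eigenvector (q s : ℕ) (hq : 0 < q) (hs : 0 < s)
    (r : Fin (min q s) → ℕ) (hr : Antitone r)
    (α : Matrix (Fin q) (Fin q) ℂ) (hα : ∀ i k : Fin q, k < i → α i k = 0)
    (β : Matrix (Fin s) (Fin s) ℂ) (hβ : ∀ i k : Fin s, k < i → β i k = 0)
    (z : Matrix (Fin q) (Fin s) ℂ) :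
    hwVector q s r (αᵀ * z * β) =
      (∏ j : Fin (min q s),
        (detUL ((j : ℕ) + 1) ((Nat.succ_le_of_lt j.isLt).trans (Nat.min_le_left q s))
          ((Nat.succ_le_of_lt j.isLt).trans (Nat.min_le_left q s)) α) ^ (wtExps r j)) *
      (∏ j : Fin (min q s),
        (detUL ((j : ℕ) + 1) ((Nat.succ_le_of_lt j.isLt).trans (Nat.min_le_right q s))
          ((Nat.succ_le_of_lt j.isLt).trans (Nat.min_le_right q s)) β) ^ (wtExps r j)) *
      hwVector q s r z :=
  hwVector_eigenvector_general q s r α hα β hβ z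
end
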